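/- For n ≥ 3, the maximum cardinality of a flag code of type (1, n-1) on F_q^n with flag distance 4 is (q^n - 1)/(q - 1) = q^{n-1} + q^{n-2} + ... + q + 1, and this maximum is attained. -/

import Mathlib

open Module

/-- The subspace distance `d_S(U,V) = dim(U+V) - dim(U∩V)`. -/
noncomputable def sDist {F : Type*} [Field F] {n : ℕ} (U V : Submodule F (Fin n → F)) : ℕ :=
  finrank F ↥(U ⊔ V) - finrank F ↥(U ⊓ V)

set_option maxHeartbeats 1000000
set_option linter.unusedSectionVars false
set_option linter.unnecessarySimpa false

open Module Finset

section Counting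

variable (F : Type*) [Field F] [Fintype F]

noncomputable instance submoduleFintype (M : Type*) [AddCommGroup M] [Module F M] [Finite M] :
    Fintype (Submodule F M) :=
  have : Finite (Submodule F M) :=
    Finite.of_injective (fun W => (W : Set M)) SetLike.coe_injective
  Fintype.ofFinite _

instance dualFinite (M : Type*) [AddCommGroup M] [Module F M] [Finite M] :
    Finite (Module.Dual F M) :=
  Finite.of_injective (fun f => (f : M → F)) DFunLike.coe_injective

variable (M : Type*) [AddCommGroup M] [Module F M] [Finite M]

instance quotFinite (l : Submodule F M) : Finite (M ⧸ l) :=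
  Finite.of_surjective (l.mkQ : M → M ⧸ l) (Submodule.mkQ_surjective l)

/-- The set of `k`-dimensional subspaces. -/
noncomputable def grd (k : ℕ) : Finset (Submodule F M) :=
  @Finset.filter _ (fun W => finrank F W = k) (Classical.decPred _) Finset.univ

variable {F M}

omit [Fintype F] in
lemma mem_grd {k : ℕ} {W : Submodule F M} : W ∈ grd F M k ↔ finrank F W = k := by
  simp [grd]

lemma card_ne_aux {α : Type*} [Fintype α] (a : α) :
    Nat.card {x : α // x ≠ a} = Fintype.card α - 1 := by
  classical
  rw [Nat.card_eq_fintype_card]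
  have h := Fintype.card_subtype_compl (fun x : α => x = a)
  simpa [Fintype.card_subtype_eq] using h

lemma card_grd_one_mul :
    (grd F M 1).card * (Fintype.card F - 1) = Fintype.card F ^ finrank F M - 1 := by
  classical
  haveI : Fintype M := Fintype.ofFinite M
  set q := Fintype.card F with hq
  have key : (Finset.univ.filter (fun v : M => v ≠ 0)).card
      = ∑ l ∈ grd F M 1,
        ((Finset.univ.filter (fun v : M => v ≠ 0)).filter
          (fun v => Submodule.span F {v} = l)).card := by
    apply Finset.card_eq_sum_card_fiberwise
    intro v hv
    simp only [Finset.mem_coe, Finset.mem_filter, Finset.mem_univ, true_and] at hv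
    exact mem_grd.mpr (finrank_span_singleton hv)
  have fib : ∀ l ∈ grd F M 1,
      ((Finset.univ.filter (fun v : M => v ≠ 0)).filter
        (fun v => Submodule.span F {v} = l)).card = q - 1 := by
    intro l hl
    have hl1 : finrank F l = 1 := mem_grd.mp hl
    have heq : ((Finset.univ.filter (fun v : M => v ≠ 0)).filter
        (fun v => Submodule.span F {v} = l))
        = Finset.univ.filter (fun v : M => v ∈ l ∧ v ≠ 0) := by
      ext v
      simp only [Finset.mem_filter, Finset.mem_univ, true_and]
      constructor
      · rintro ⟨hv0, rfl⟩
        exact ⟨Submodule.mem_span_singleton_self v, hv0⟩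
      · rintro ⟨hvl, hv0⟩
        refine ⟨hv0, ?_⟩
        apply Submodule.eq_of_le_of_finrank_eq
        · rwa [Submodule.span_le, Set.singleton_subset_iff]
        · rw [finrank_span_singleton hv0, hl1]
    rw [heq]
    have hcard1 : (Finset.univ.filter (fun v : M => v ∈ l ∧ v ≠ 0)).card
        = Fintype.card {v : M // v ∈ l ∧ v ≠ 0} := (Fintype.card_subtype _).symm
    have e : {v : M // v ∈ l ∧ v ≠ 0} ≃ {x : l // x ≠ 0} :=
      { toFun := fun v => ⟨⟨v.1, v.2.1⟩, by
          simpa [Submodule.mk_eq_zero] using v.2.2⟩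
        invFun := fun x => ⟨x.1.1, x.1.2, by
          simpa [Submodule.coe_eq_zero] using x.2⟩
        left_inv := fun v => rfl
        right_inv := fun x => rfl }
    have hc2 : Fintype.card {v : M // v ∈ l ∧ v ≠ 0} = Nat.card {x : l // x ≠ 0} := by
      rw [← Nat.card_eq_fintype_card]
      exact Nat.card_congr e
    have hc3 : Nat.card {x : l // x ≠ 0} = Fintype.card l - 1 := card_ne_aux (α := l) 0
    have hc4 : Fintype.card l = q := by
      rw [card_eq_pow_finrank (K := F) (V := l), hl1, pow_one]
    rw [hcard1, hc2, hc3, hc4]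
  have hNZ : (Finset.univ.filter (fun v : M => v ≠ 0)).card = Fintype.card M - 1 := by
    rw [← Fintype.card_subtype, ← Nat.card_eq_fintype_card]
    exact card_ne_aux (α := M) 0
  have h2 : (Finset.univ.filter (fun v : M => v ≠ 0)).card = (grd F M 1).card * (q - 1) := by
    rw [key, Finset.sum_congr rfl fib, Finset.sum_const, smul_eq_mul]
  rw [← h2, hNZ, card_eq_pow_finrank (K := F) (V := M)]


lemma geom_aux {q : ℕ} (hq : 1 ≤ q) (m : ℕ) :
    (∑ i ∈ Finset.range m, q ^ i) * (q - 1) = q ^ m - 1 := by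
  induction m with
  | zero => simp
  | succ m ih =>
    rw [Finset.sum_range_succ, Nat.add_mul, ih, pow_succ]
    have h1 : 1 ≤ q ^ m := Nat.one_le_pow _ _ hq
    have h2 : q ^ m * (q - 1) = q ^ m * q - q ^ m := by
      rw [Nat.mul_sub, mul_one]
    have h3 : q ^ m ≤ q ^ m * q := Nat.le_mul_of_pos_right _ hq
    omega

lemma card_grd_one :
    (grd F M 1).card = ∑ i ∈ Finset.range (finrank F M), Fintype.card F ^ i := by
  have h2 : 2 ≤ Fintype.card F := Fintype.one_lt_card
  have h := card_grd_one_mul (F := F) (M := M)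
  rw [← geom_aux (le_trans one_le_two h2) (finrank F M)] at h
  exact Nat.eq_of_mul_eq_mul_right (by omega) h

lemma card_grd_hyper (hm : 1 ≤ finrank F M) :
    (grd F M (finrank F M - 1)).card = ∑ i ∈ Finset.range (finrank F M), Fintype.card F ^ i := by
  classical
  have key : (grd F M (finrank F M - 1)).card = (grd F (Module.Dual F M) 1).card := by
    apply Finset.card_bij (fun W _ => Submodule.dualAnnihilator W)
    · intro W hW
      have hW1 : finrank F W = finrank F M - 1 := mem_grd.mp hW
      have e := Subspace.quotEquivAnnihilator W
      have h1 : finrank F (M ⧸ W) = finrank F W.dualAnnihilator := e.finrank_eq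
      have h2 : finrank F (M ⧸ W) + finrank F W = finrank F M :=
        Submodule.finrank_quotient_add_finrank W
      exact mem_grd.mpr (by omega)
    · intro W1 h1 W2 h2 heq
      exact Subspace.dualAnnihilator_inj.mp heq
    · intro Φ hΦ
      have hΦ1 : finrank F Φ = 1 := mem_grd.mp hΦ
      refine ⟨Φ.dualCoannihilator, ?_, Subspace.dualCoannihilator_dualAnnihilator_eq⟩
      have h1 : finrank F Φ + finrank F Φ.dualCoannihilator = finrank F M :=
        Subspace.finrank_add_finrank_dualCoannihilator_eq Φ
      exact mem_grd.mpr (by omega)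
  rw [key, card_grd_one, Subspace.dual_finrank_eq]

open Classical in
lemma card_lines_le (H : Submodule F M) :
    (Finset.univ.filter (fun l : Submodule F M => finrank F l = 1 ∧ l ≤ H)).card
      = ∑ i ∈ Finset.range (finrank F H), Fintype.card F ^ i := by
  rw [← card_grd_one (F := F) (M := H)]
  apply Finset.card_bij (fun l _ => Submodule.comap H.subtype l)
  · intro l hl
    simp only [Finset.mem_filter, Finset.mem_univ, true_and] at hl
    refine mem_grd.mpr ?_
    rw [(Submodule.comapSubtypeEquivOfLe hl.2).finrank_eq]
    exact hl.1
  · intro l1 h1 l2 h2 heq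
    simp only [Finset.mem_filter, Finset.mem_univ, true_and] at h1 h2
    have k1 : Submodule.map H.subtype (Submodule.comap H.subtype l1) = l1 := by
      rw [Submodule.map_comap_subtype, inf_eq_right.mpr h1.2]
    have k2 : Submodule.map H.subtype (Submodule.comap H.subtype l2) = l2 := by
      rw [Submodule.map_comap_subtype, inf_eq_right.mpr h2.2]
    rw [← k1, ← k2, heq]
  · intro p hp
    refine ⟨Submodule.map H.subtype p, ?_, ?_⟩
    · simp only [Finset.mem_filter, Finset.mem_univ, true_and]
      constructor
      · rw [Submodule.finrank_map_subtype_eq]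
        exact mem_grd.mp hp
      · exact Submodule.map_subtype_le H p
    · rw [Submodule.comap_map_eq, Submodule.ker_subtype, sup_bot_eq]

open Classical in
lemma card_hyper_ge (l : Submodule F M) (hl : finrank F l = 1) (hm : 2 ≤ finrank F M) :
    (Finset.univ.filter
        (fun H : Submodule F M => finrank F H = finrank F M - 1 ∧ l ≤ H)).card
      = ∑ i ∈ Finset.range (finrank F M - 1), Fintype.card F ^ i := by
  have hq : finrank F (M ⧸ l) + finrank F l = finrank F M :=
    Submodule.finrank_quotient_add_finrank l
  have hqr : finrank F (M ⧸ l) = finrank F M - 1 := by omega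
  have comap_rank : ∀ H' : Submodule F (M ⧸ l),
      finrank F (Submodule.comap l.mkQ H') = finrank F H' + 1 := by
    intro H'
    set W := Submodule.comap l.mkQ H' with hW
    have hlW : l ≤ W := by
      intro x hx
      simp only [hW, Submodule.mem_comap, Submodule.mkQ_apply]
      rw [Submodule.Quotient.mk_eq_zero l |>.mpr hx]
      exact H'.zero_mem
    have rn := LinearMap.finrank_range_add_finrank_ker (l.mkQ.comp W.subtype)
    have hr : LinearMap.range (l.mkQ.comp W.subtype) = H' := by
      rw [LinearMap.range_comp, Submodule.range_subtype, hW,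
        Submodule.map_comap_eq, Submodule.range_mkQ, top_inf_eq]
    have hk : LinearMap.ker (l.mkQ.comp W.subtype) = Submodule.comap W.subtype l := by
      rw [LinearMap.ker_comp, Submodule.ker_mkQ]
    rw [hr, hk] at rn
    rw [(Submodule.comapSubtypeEquivOfLe hlW).finrank_eq, hl] at rn
    omega
  have key : (Finset.univ.filter
      (fun H : Submodule F M => finrank F H = finrank F M - 1 ∧ l ≤ H)).card
      = (grd F (M ⧸ l) (finrank F (M ⧸ l) - 1)).card := by
    apply Finset.card_bij (fun H _ => Submodule.map l.mkQ H)
    · intro H hH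
      simp only [Finset.mem_filter, Finset.mem_univ, true_and] at hH
      refine mem_grd.mpr ?_
      have hcm : Submodule.comap l.mkQ (Submodule.map l.mkQ H) = H := by
        rw [Submodule.comap_map_eq, Submodule.ker_mkQ, sup_eq_left.mpr hH.2]
      have := comap_rank (Submodule.map l.mkQ H)
      rw [hcm, hH.1] at this
      omega
    · intro H1 h1 H2 h2 heq
      simp only [Finset.mem_filter, Finset.mem_univ, true_and] at h1 h2
      have k1 : Submodule.comap l.mkQ (Submodule.map l.mkQ H1) = H1 := by
        rw [Submodule.comap_map_eq, Submodule.ker_mkQ, sup_eq_left.mpr h1.2]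
      have k2 : Submodule.comap l.mkQ (Submodule.map l.mkQ H2) = H2 := by
        rw [Submodule.comap_map_eq, Submodule.ker_mkQ, sup_eq_left.mpr h2.2]
      rw [← k1, ← k2, heq]
    · intro H' hH'
      refine ⟨Submodule.comap l.mkQ H', ?_, ?_⟩
      · simp only [Finset.mem_filter, Finset.mem_univ, true_and]
        have h1 := comap_rank H'
        have h2 : finrank F H' = finrank F (M ⧸ l) - 1 := mem_grd.mp hH'
        constructor
        · omega
        · intro x hx
          simp only [Submodule.mem_comap, Submodule.mkQ_apply]
          rw [Submodule.Quotient.mk_eq_zero l |>.mpr hx]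
          exact H'.zero_mem
      · rw [Submodule.map_comap_eq, Submodule.range_mkQ, top_inf_eq]
  rw [key, card_grd_hyper (by omega), hqr]

end Counting

section DistLemmas

variable {F : Type*} [Field F] [Fintype F] {n : ℕ}

lemma sDist_self (U : Submodule F (Fin n → F)) : sDist U U = 0 := by
  rw [sDist, sup_idem, inf_idem, Nat.sub_self]

lemma sDist_lines {U U' : Submodule F (Fin n → F)} (h1 : finrank F U = 1)
    (h2 : finrank F U' = 1) (hne : U ≠ U') : sDist U U' = 2 := by
  have hsum := Submodule.finrank_sup_add_finrank_inf_eq U U'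
  have hinf : finrank F (U ⊓ U' : Submodule F (Fin n → F)) = 0 := by
    by_contra h
    have hle : finrank F (U ⊓ U' : Submodule F (Fin n → F)) ≤ finrank F U :=
      Submodule.finrank_mono inf_le_left
    have h11 : finrank F (U ⊓ U' : Submodule F (Fin n → F)) = 1 := by omega
    have e1 : U ⊓ U' = U :=
      Submodule.eq_of_le_of_finrank_eq inf_le_left (by omega)
    have e2 : U ⊓ U' = U' :=
      Submodule.eq_of_le_of_finrank_eq inf_le_right (by omega)
    exact hne (e1.symm.trans e2)
  rw [sDist]
  omega

lemma sDist_hyper_le {U U' : Submodule F (Fin n → F)} (h1 : finrank F U = n - 1)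
    (h2 : finrank F U' = n - 1) (hn : 3 ≤ n) : sDist U U' ≤ 2 := by
  have hsum := Submodule.finrank_sup_add_finrank_inf_eq U U'
  have hfin : finrank F (Fin n → F) = n := Module.finrank_fin_fun F
  have hsup_le : finrank F (U ⊔ U' : Submodule F (Fin n → F)) ≤ n := by
    calc finrank F (U ⊔ U' : Submodule F (Fin n → F)) ≤ finrank F (Fin n → F) :=
          Submodule.finrank_le _
      _ = n := hfin
  rw [sDist]
  omega

lemma sDist_hyper {U U' : Submodule F (Fin n → F)} (h1 : finrank F U = n - 1)
    (h2 : finrank F U' = n - 1) (hn : 3 ≤ n) (hne : U ≠ U') : sDist U U' = 2 := by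
  have hsum := Submodule.finrank_sup_add_finrank_inf_eq U U'
  have hfin : finrank F (Fin n → F) = n := Module.finrank_fin_fun F
  have hsup_le : finrank F (U ⊔ U' : Submodule F (Fin n → F)) ≤ n := by
    calc finrank F (U ⊔ U' : Submodule F (Fin n → F)) ≤ finrank F (Fin n → F) :=
          Submodule.finrank_le _
      _ = n := hfin
  have hU_le : finrank F U ≤ finrank F (U ⊔ U' : Submodule F (Fin n → F)) :=
    Submodule.finrank_mono le_sup_left
  have hsup_ne : finrank F (U ⊔ U' : Submodule F (Fin n → F)) ≠ n - 1 := by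
    intro h
    have e1 : U = U ⊔ U' :=
      Submodule.eq_of_le_of_finrank_eq le_sup_left (by omega)
    have e2 : U' = U ⊔ U' :=
      Submodule.eq_of_le_of_finrank_eq le_sup_right (by omega)
    exact hne (e1.trans e2.symm)
  rw [sDist]
  omega

end DistLemmas

/-- For `n ≥ 3`, the maximum cardinality of a flag code of type `(1, n-1)`
on `F_q^n` with flag distance `4` is `(q^n - 1)/(q - 1) = q^{n-1} + ... + q + 1`, and this
maximum is attained. -/
theorem max_card_flag_code_type_one_nminusone {q n : ℕ} {F : Type*} [Field F] [Fintype F]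
    (hq : Fintype.card F = q) (hn : 3 ≤ n) :
    (q ^ n - 1) / (q - 1) = ∑ i ∈ Finset.range n, q ^ i ∧
    (∀ C : Finset (Submodule F (Fin n → F) × Submodule F (Fin n → F)),
      (∀ p ∈ C, finrank F p.1 = 1 ∧ finrank F p.2 = n - 1 ∧ p.1 ≤ p.2) →
      (∀ p ∈ C, ∀ p' ∈ C, p ≠ p' → sDist p.1 p'.1 + sDist p.2 p'.2 = 4) →
      C.card ≤ (q ^ n - 1) / (q - 1)) ∧
    (∃ C : Finset (Submodule F (Fin n → F) × Submodule F (Fin n → F)),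
      (∀ p ∈ C, finrank F p.1 = 1 ∧ finrank F p.2 = n - 1 ∧ p.1 ≤ p.2) ∧
      (∀ p ∈ C, ∀ p' ∈ C, p ≠ p' → sDist p.1 p'.1 + sDist p.2 p'.2 = 4) ∧
      C.card = (q ^ n - 1) / (q - 1)) := by
  classical
  subst hq
  have hq2 : 2 ≤ Fintype.card F := Fintype.one_lt_card
  have hVfin : finrank F (Fin n → F) = n := Module.finrank_fin_fun F
  have part1 : (Fintype.card F ^ n - 1) / (Fintype.card F - 1)
      = ∑ i ∈ Finset.range n, Fintype.card F ^ i := by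
    rw [← geom_aux (by omega) n, Nat.mul_div_cancel _ (by omega)]
  have hgrd : (grd F (Fin n → F) 1).card = ∑ i ∈ Finset.range n, Fintype.card F ^ i := by
    rw [card_grd_one, hVfin]
  refine ⟨part1, ?_, ?_⟩
  · -- upper bound
    intro C hC hd
    have hle : C.card ≤ (grd F (Fin n → F) 1).card := by
      apply Finset.card_le_card_of_injOn (fun p => p.1)
      · intro p hp
        exact mem_grd.mpr (hC p hp).1
      · intro p hp p' hp' hpp
        simp only [Finset.mem_coe] at hp hp'
        by_contra hne
        have h4 := hd p hp p' hp' hne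
        have h0 : sDist p.1 p'.1 = 0 := by
          rw [show p.1 = p'.1 from hpp, sDist_self]
        have h2 : sDist p.2 p'.2 ≤ 2 :=
          sDist_hyper_le (hC p hp).2.1 (hC p' hp').2.1 hn
        omega
    rw [part1]
    rw [hgrd] at hle
    exact hle
  · -- existence
    set ι := {l : Submodule F (Fin n → F) // finrank F l = 1} with hι
    let t : ι → Finset (Submodule F (Fin n → F)) := fun l =>
      Finset.univ.filter (fun H => finrank F H = n - 1 ∧ l.1 ≤ H)
    set r := ∑ i ∈ Finset.range (n - 1), Fintype.card F ^ i with hr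
    have ht : ∀ l : ι, (t l).card = r := by
      intro l
      have h := card_hyper_ge (F := F) (M := Fin n → F) l.1 l.2 (by omega)
      simp only [hVfin] at h
      exact h
    have hr1 : 1 ≤ r := by
      have h0 : (0 : ℕ) ∈ Finset.range (n - 1) := Finset.mem_range.mpr (by omega)
      calc (1 : ℕ) = Fintype.card F ^ 0 := (pow_zero _).symm
        _ ≤ r := Finset.single_le_sum (f := fun i => Fintype.card F ^ i)
            (fun i _ => Nat.zero_le _) h0
    have hall : ∀ s : Finset ι, s.card ≤ (s.biUnion t).card := by
      intro s
      have h1 : ∀ i ∈ s, (t i).card = ((s.biUnion t).filter (· ∈ t i)).card := by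
        intro i hi
        congr 1
        ext H
        simp only [Finset.mem_filter, iff_and_self]
        intro hH
        exact Finset.mem_biUnion.mpr ⟨i, hi, hH⟩
      have h2 : ∑ i ∈ s, ((s.biUnion t).filter (· ∈ t i)).card
          = ∑ H ∈ s.biUnion t, (s.filter (fun i => H ∈ t i)).card := by
        simp_rw [Finset.card_filter]
        rw [Finset.sum_comm]
      have h3 : ∀ H ∈ s.biUnion t, (s.filter (fun i => H ∈ t i)).card ≤ r := by
        intro H hH
        obtain ⟨i0, hi0s, hi0⟩ := Finset.mem_biUnion.mp hH
        have hHrank : finrank F H = n - 1 :=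
          (Finset.mem_filter.mp hi0).2.1
        have hcl := card_lines_le (F := F) (M := Fin n → F) H
        rw [hHrank] at hcl
        calc (s.filter (fun i => H ∈ t i)).card
            ≤ (Finset.univ.filter
                (fun l : Submodule F (Fin n → F) => finrank F l = 1 ∧ l ≤ H)).card := by
              apply Finset.card_le_card_of_injOn (fun i => i.1)
              · intro i hi
                simp only [Finset.mem_coe, Finset.mem_filter] at hi
                have := (Finset.mem_filter.mp hi.2).2
                exact Finset.mem_filter.mpr ⟨Finset.mem_univ _, i.2, this.2⟩
              · intro a _ b _ hab
                exact Subtype.ext hab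
          _ = r := hcl
      have hsum : ∑ i ∈ s, (t i).card = r * s.card := by
        rw [Finset.sum_congr rfl (fun i _ => ht i), Finset.sum_const, smul_eq_mul, mul_comm]
      have hineq : r * s.card ≤ (s.biUnion t).card * r := by
        calc r * s.card = ∑ i ∈ s, (t i).card := hsum.symm
          _ = ∑ i ∈ s, ((s.biUnion t).filter (· ∈ t i)).card := Finset.sum_congr rfl h1
          _ = ∑ H ∈ s.biUnion t, (s.filter (fun i => H ∈ t i)).card := h2
          _ ≤ ∑ _H ∈ s.biUnion t, r := Finset.sum_le_sum h3
          _ = (s.biUnion t).card * r := by rw [Finset.sum_const, smul_eq_mul]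
      rw [mul_comm] at hineq
      exact Nat.le_of_mul_le_mul_right hineq (by omega)
    obtain ⟨f, hfinj, hfmem⟩ := (Finset.all_card_le_biUnion_card_iff_exists_injective t).mp hall
    haveI : Fintype ι := Fintype.ofFinite ι
    refine ⟨(Finset.univ : Finset ι).image (fun l => (l.1, f l)), ?_, ?_, ?_⟩
    · intro p hp
      obtain ⟨l, _, rfl⟩ := Finset.mem_image.mp hp
      have hm := Finset.mem_filter.mp (hfmem l)
      exact ⟨l.2, hm.2.1, hm.2.2⟩
    · intro p hp p' hp' hne
      obtain ⟨l, _, rfl⟩ := Finset.mem_image.mp hp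
      obtain ⟨l', _, rfl⟩ := Finset.mem_image.mp hp'
      have hll' : l ≠ l' := by
        rintro rfl
        exact hne rfl
      have hl1 : l.1 ≠ l'.1 := fun h => hll' (Subtype.ext h)
      have hf1 : f l ≠ f l' := fun h => hll' (hfinj h)
      have hm := Finset.mem_filter.mp (hfmem l)
      have hm' := Finset.mem_filter.mp (hfmem l')
      simp only
      rw [sDist_lines l.2 l'.2 hl1, sDist_hyper hm.2.1 hm'.2.1 hn hf1]
    · rw [Finset.card_image_of_injective _
        (fun a b h => Subtype.ext (congrArg Prod.fst h)), Finset.card_univ]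
      have hcard : Fintype.card ι = (grd F (Fin n → F) 1).card := by
        have e : grd F (Fin n → F) 1
            = Finset.univ.filter (fun W : Submodule F (Fin n → F) => finrank F W = 1) := by
          ext W
          simp [mem_grd]
        rw [e, ← Fintype.card_subtype, Fintype.card_eq_nat_card]
      rw [hcard, hgrd, part1]
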